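/- Let t be an odd integer and let b be the smallest positive integer such that t ≢ ±1 (mod 2^b). Fix c ≥ 0 and define s(n) = ((t^2)^(n+c) - 1)/2^b. Then for every n ≥ 1, the least positive integer m such that s(0), s(1), ..., s(n-1) are pairwise incongruent modulo m equals 2^⌈log₂ n⌉. -/

import Mathlib

/-!
Write `q = t²`. The minimality of `b` says exactly that `2 ^ b ∥ q - 1`, and `2 ^ b * s n = q ^ (n + c) - 1`.
By lifting the exponent, `2 ^ (b + a) ∣ q ^ k - 1 ↔ 2 ^ a ∣ k`, so `s i ≡ s j [ZMOD 2 ^ a]` iff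
`2 ^ a ∣ i - j`, and the first `n` terms are distinct modulo `2 ^ ⌈log₂ n⌉`.
Conversely, let `m = 2 ^ a * m₀ < 2 ^ ⌈log₂ n⌉` with `m₀` odd. The terms `s (2 ^ a * k)` all agree
modulo `2 ^ a`, and modulo `m₀` each is determined by the square `(t ^ (2 ^ a * k + c)) ^ 2`, which takes
at most `m₀ / 2 + 1` values; so two of them with `k ≤ m₀ / 2 + 1` (hence `2 ^ a * k < n`) agree modulo `m`.
-/

theorem two_pow_succ_dvd_sq_sub_one_iff {t : ℤ} (ht : Odd t) (b : ℕ) :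
    2 ^ (b + 1) ∣ t ^ 2 - 1 ↔ t ≡ 1 [ZMOD 2 ^ b] ∨ t ≡ -1 [ZMOD 2 ^ b] := by
  simp only [Int.modEq_comm (a := t), Int.modEq_iff_dvd, sub_neg_eq_add]
  obtain ⟨k, rfl⟩ := ht
  have cancel (x y : ℤ) (hy : Odd y) (h : 2 ^ (b + 1) ∣ 2 * x * y) : 2 ^ b ∣ x := by
    rw [pow_succ', mul_assoc] at h
    exact (Int.isCoprime_two_left.2 hy).pow_left.dvd_of_dvd_mul_right
      ((mul_dvd_mul_iff_left two_ne_zero).1 h)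
  constructor
  · intro h
    rcases Int.even_or_odd k with hk | hk
    · exact .inl (cancel _ (k + 1) hk.add_one (by convert h using 1; ring))
    · exact .inr (cancel _ k hk (by convert h using 1; ring))
  · rw [pow_succ]
    rintro (h | h)
    · exact (mul_dvd_mul h (dvd_mul_right 2 (k + 1))).trans (dvd_of_eq (by ring))
    · exact (mul_dvd_mul h (dvd_mul_right 2 k)).trans (dvd_of_eq (by ring))

theorem two_pow_add_dvd_pow_sub_one_iff {q : ℤ} {b : ℕ} (hb : 2 ≤ b) (hq : 2 ^ b ∣ q - 1)
    (hq' : ¬2 ^ (b + 1) ∣ q - 1) (k a : ℕ) : 2 ^ (b + a) ∣ q ^ k - 1 ↔ 2 ^ a ∣ k := by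
  have h4 : (4 : ℤ) ∣ q - 1 := (pow_dvd_pow 2 hb).trans hq
  have hq_odd : ¬(2 : ℤ) ∣ q := by omega
  have lte := Int.two_pow_sub_pow' k (y := 1) (by simpa using h4) hq_odd
  rw [emultiplicity_eq_coe.2 ⟨hq, hq'⟩] at lte
  simp only [one_pow] at lte
  rw [pow_dvd_iff_le_emultiplicity, lte, Nat.cast_add,
    ENat.add_le_add_iff_left (ENat.natCast_ne_top b), ← pow_dvd_iff_le_emultiplicity]
  exact_mod_cast Int.natCast_dvd_natCast

theorem Int.exists_lt_sq_modEq_sq {m : ℕ} (hm : m ≠ 0) (f : ℕ → ℤ) :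
    ∃ i j, j < i ∧ i ≤ m / 2 + 1 ∧ f i ^ 2 ≡ f j ^ 2 [ZMOD m] := by
  have : NeZero m := ⟨hm⟩
  -- `x ^ 2` only depends on `|x|`, and every class mod `m` has a representative with `|x| ≤ m / 2`
  obtain ⟨x, hx, y, hy, hxy, hfxy⟩ := Finset.exists_ne_map_eq_of_card_lt_of_maps_to
    (s := Finset.range (m / 2 + 2)) (t := Finset.range (m / 2 + 1))
    (f := fun k ↦ (f k : ZMod m).valMinAbs.natAbs) (by simp)
    (fun k _ ↦ by simpa [Nat.lt_succ_iff] using ZMod.natAbs_valMinAbs_le _)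
  have hsq : f x ^ 2 ≡ f y ^ 2 [ZMOD m] := by
    rw [← ZMod.intCast_eq_intCast_iff, Int.cast_pow, Int.cast_pow]
    rcases ZMod.natAbs_valMinAbs_eq_natAbs_valMinAbs.1 hfxy with h | h <;> simp [h]
  simp only [Finset.mem_range] at hx hy
  rcases hxy.lt_or_gt with h | h
  · exact ⟨y, x, h, by omega, hsq.symm⟩
  · exact ⟨x, y, h, by omega, hsq⟩

theorem modEq_iff_dvd_pow_mul_pow_sub_one {d q : ℤ} (hd : d ≠ 0) {c : ℕ} {s : ℕ → ℤ}
    (hs : ∀ n, d * s n = q ^ (n + c) - 1) {i j : ℕ} (hji : j ≤ i) (m : ℤ) :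
    s i ≡ s j [ZMOD m] ↔ d * m ∣ q ^ (j + c) * (q ^ (i - j) - 1) := by
  have : d * (s i - s j) = q ^ (j + c) * (q ^ (i - j) - 1) := by
    rw [mul_sub, hs, hs, show i + c = i - j + (j + c) by omega, pow_add]
    ring
  rw [Int.modEq_comm, Int.modEq_iff_dvd, ← this, mul_dvd_mul_iff_left hd]

theorem not_modEq_two_pow_of_ne {q : ℤ} {b c : ℕ} {s : ℕ → ℤ} (hb : 2 ≤ b) (hq : 2 ^ b ∣ q - 1)
    (hq' : ¬2 ^ (b + 1) ∣ q - 1) (hs : ∀ n, 2 ^ b * s n = q ^ (n + c) - 1) {E i j : ℕ}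
    (hij : i ≠ j) (hi : i < 2 ^ E) (hj : j < 2 ^ E) : ¬s i ≡ s j [ZMOD 2 ^ E] := by
  wlog hji : j < i generalizing i j
  · exact fun h ↦ this hij.symm hj hi (by omega) h.symm
  have hcop : IsCoprime (2 ^ (b + E)) (q ^ (j + c)) := by
    refine (Int.isCoprime_two_left.2 (Odd.pow ?_)).pow_left
    rw [← Int.not_even_iff_odd, ← Int.even_sub_one]
    exact (even_iff_two_dvd.2 ((dvd_pow_self 2 (by omega)).trans hq))
  rw [modEq_iff_dvd_pow_mul_pow_sub_one (by positivity) hs hji.le, ← pow_add]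
  intro h
  have := (two_pow_add_dvd_pow_sub_one_iff hb hq hq' _ _).1 (hcop.dvd_of_dvd_mul_left h)
  exact absurd (Nat.le_of_dvd (by omega) this) (by omega)

theorem exists_lt_modEq_of_lt_two_pow {t : ℤ} {b c : ℕ} {s : ℕ → ℤ} (hb : 2 ≤ b)
    (hq : 2 ^ b ∣ t ^ 2 - 1) (hq' : ¬2 ^ (b + 1) ∣ t ^ 2 - 1)
    (hs : ∀ n, 2 ^ b * s n = (t ^ 2) ^ (n + c) - 1) {E m : ℕ} (hm : 0 < m) (hmE : m < 2 ^ E) :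
    ∃ i j, j < i ∧ 2 * i ≤ 2 ^ E ∧ s i ≡ s j [ZMOD m] := by
  obtain ⟨a, m₀, hm₀, rfl⟩ := Nat.exists_eq_two_pow_mul_odd hm.ne'
  obtain ⟨k, k', hk, hkm, hsq⟩ := Int.exists_lt_sq_modEq_sq hm₀.pos.ne' fun k ↦ t ^ (2 ^ a * k + c)
  refine ⟨2 ^ a * k, 2 ^ a * k', by gcongr, ?_, ?_⟩
  · have haE : a < E := (Nat.pow_lt_pow_iff_right one_lt_two).1
      ((Nat.le_mul_of_pos_right _ hm₀.pos).trans_lt hmE)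
    have : m₀ < 2 ^ (E - a) := by
      rw [← Nat.mul_lt_mul_left (Nat.two_pow_pos a), ← pow_add, Nat.add_sub_cancel' haE.le]
      exact hmE
    calc 2 * (2 ^ a * k) = 2 ^ a * (2 * k) := by ring
      _ ≤ 2 ^ a * 2 ^ (E - a) := by gcongr; have := Nat.odd_iff.1 hm₀; omega
      _ = 2 ^ E := by rw [← pow_add, Nat.add_sub_cancel' haE.le]
  · rw [modEq_iff_dvd_pow_mul_pow_sub_one (by positivity) hs (by gcongr)]
    push_cast
    rw [← mul_assoc, ← pow_add]
    refine IsCoprime.mul_dvd ?_ ?_ ?_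
    · exact (Int.isCoprime_two_left.2 (by exact_mod_cast hm₀)).pow_left
    · refine dvd_mul_of_dvd_right ((two_pow_add_dvd_pow_sub_one_iff hb hq hq' _ _).2 ?_) _
      rw [← Nat.mul_sub]; exact dvd_mul_right _ _
    · refine hsq.symm.dvd.trans (dvd_of_eq ?_)
      have : 2 ^ a * k' ≤ 2 ^ a * k := by gcongr
      simp only [← pow_mul]
      rw [mul_sub, mul_one, ← pow_add]
      congr 2 <;> omega

theorem shifted_discriminator (t : ℤ) (ht : Odd t) (b : ℕ)
    (hb : IsLeast {b : ℕ | 0 < b ∧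
      ¬(t ≡ 1 [ZMOD (2 ^ b : ℤ)] ∨ t ≡ -1 [ZMOD (2 ^ b : ℤ)])} b)
    (c : ℕ) (s : ℕ → ℤ) (hsdef : ∀ n, s n = ((t ^ 2) ^ (n + c) - 1) / 2 ^ b) :
    ∀ n : ℕ, 1 ≤ n →
      IsLeast {m : ℕ | 0 < m ∧ ∀ i j : ℕ, i < n → j < n → i ≠ j →
        ¬(s i ≡ s j [ZMOD (m : ℤ)])} (2 ^ Nat.clog 2 n) := by
  obtain ⟨⟨hb0, hbt⟩, hbmin⟩ := hb
  have hb2 : 2 ≤ b := by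
    by_contra! h
    obtain rfl : b = 1 := by omega
    exact hbt (.inl (Int.odd_iff.1 ht))
  have hq : 2 ^ b ∣ t ^ 2 - 1 := by
    obtain ⟨b', rfl⟩ : ∃ b', b = b' + 1 := ⟨b - 1, by omega⟩
    refine (two_pow_succ_dvd_sq_sub_one_iff ht b').2 (not_not.1 fun h ↦ ?_)
    exact absurd (hbmin ⟨by omega, h⟩) (by omega)
  have hq' : ¬2 ^ (b + 1) ∣ t ^ 2 - 1 := (two_pow_succ_dvd_sq_sub_one_iff ht b).not.2 hbt
  have hs (n : ℕ) : 2 ^ b * s n = (t ^ 2) ^ (n + c) - 1 := by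
    rw [hsdef, Int.mul_ediv_cancel' (hq.trans (sub_one_dvd_pow_sub_one _ _))]
  intro n hn
  have hn_le : n ≤ 2 ^ Nat.clog 2 n := Nat.le_pow_clog one_lt_two n
  refine ⟨⟨by positivity, fun i j hi hj hij ↦ ?_⟩, fun m ⟨hm, hdistinct⟩ ↦ ?_⟩
  · exact_mod_cast not_modEq_two_pow_of_ne hb2 hq hq' hs hij (by omega) (by omega)
  · by_contra! hmn
    obtain rfl | hn1 := hn.eq_or_lt
    · simp at hmn; omega
    obtain ⟨i, j, hji, hi, hij⟩ := exists_lt_modEq_of_lt_two_pow hb2 hq hq' hs hm hmn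
    have : 2 ^ Nat.clog 2 n < 2 * n := by
      rw [← Nat.sub_add_cancel (Nat.clog_pos one_lt_two hn1), pow_succ']
      exact Nat.mul_lt_mul_of_pos_left (Nat.pow_pred_clog_lt_self one_lt_two hn1) two_pos
    exact hdistinct i j (by omega) (by omega) hji.ne' hij
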